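/- The iterative sequence v_{k+1} = v_k + λ_k d_k with d_k = N₁ᵀ(N₁v_k + w₁⁻) (or its normalization) and λ_k ≥ 0 chosen so that ‖N₂v_{k+1} + w₂⁻‖₂ ≤ ε̃, produces a monotone nondecreasing sequence α(v_k) = ‖N₁v_k + w₁⁻‖₂ while every iterate remains feasible: ‖N₂v_k + w₂⁻‖₂ ≤ ε̃ for all k, provided v₁ is feasible. -/

import Mathlib

/-! Along `d = c • N₁ᵀ(N₁v + w₁)` with `c ≥ 0` the residual `g = N₁v + w₁` changes by
`λ N₁d`, and `g ⬝ N₁d = c ‖N₁ᵀg‖² ≥ 0`, so `‖g + λ N₁d‖² = ‖g‖² + 2λ g ⬝ N₁d + λ²‖N₁d‖²`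
can only grow for `λ ≥ 0`. Feasibility is kept because the boundary step is the nonnegative
root of `‖r + t N₂d‖ = ε`, which exists as soon as `‖r‖ ≤ ε`. -/

open Matrix

noncomputable def enorm2 {ι : Type*} [Fintype ι] (x : ι → ℝ) : ℝ :=
  Real.sqrt (∑ i, x i ^ 2)

section enorm2

variable {ι : Type*} [Fintype ι]

lemma dotProduct_self_nonneg (x : ι → ℝ) : 0 ≤ x ⬝ᵥ x :=
  Finset.sum_nonneg fun _ _ => mul_self_nonneg _

lemma enorm2_eq_sqrt_dotProduct (x : ι → ℝ) : enorm2 x = √(x ⬝ᵥ x) := by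
  simp [enorm2, dotProduct, pow_two]

lemma enorm2_nonneg (x : ι → ℝ) : 0 ≤ enorm2 x :=
  Real.sqrt_nonneg _

lemma enorm2_sq (x : ι → ℝ) : enorm2 x ^ 2 = x ⬝ᵥ x := by
  rw [enorm2_eq_sqrt_dotProduct, Real.sq_sqrt (dotProduct_self_nonneg x)]

lemma enorm2_pos {x : ι → ℝ} (hx : x ≠ 0) : 0 < enorm2 x := by
  rw [enorm2_eq_sqrt_dotProduct, Real.sqrt_pos]
  exact (dotProduct_self_nonneg x).lt_of_ne' (dotProduct_self_eq_zero.not.mpr hx)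

lemma enorm2_add_smul_sq (r u : ι → ℝ) (t : ℝ) :
    enorm2 (r + t • u) ^ 2 = enorm2 r ^ 2 + 2 * t * (r ⬝ᵥ u) + t ^ 2 * enorm2 u ^ 2 := by
  simp only [enorm2_sq, add_dotProduct, dotProduct_add, dotProduct_smul, smul_dotProduct,
    smul_eq_mul, dotProduct_comm u r]
  ring

lemma enorm2_le_enorm2_add_smul {g u : ι → ℝ} {t : ℝ} (hgu : 0 ≤ g ⬝ᵥ u) (ht : 0 ≤ t) :
    enorm2 g ≤ enorm2 (g + t • u) := by
  refine le_of_pow_le_pow_left₀ two_ne_zero (enorm2_nonneg _) ?_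
  rw [enorm2_add_smul_sq]
  have : 0 ≤ 2 * t * (g ⬝ᵥ u) := by positivity
  nlinarith [sq_nonneg t, sq_nonneg (enorm2 u)]

end enorm2

section boundaryStep

variable {ι : Type*} [Fintype ι]

/-- With `b = ‖u‖` and `a = r ⬝ (u / b)`, this is the larger root `t` of
`‖r + t u‖² = b²t² + 2abt + ‖r‖² = ε²`. -/
noncomputable def boundaryStep (ε : ℝ) (r u : ι → ℝ) : ℝ :=
  (-(r ⬝ᵥ ((enorm2 u)⁻¹ • u)) +
      √((r ⬝ᵥ ((enorm2 u)⁻¹ • u)) ^ 2 - enorm2 r ^ 2 + ε ^ 2)) / enorm2 u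

variable {ε : ℝ} {r u : ι → ℝ}

lemma boundaryStep_nonneg (hr : enorm2 r ≤ ε) : 0 ≤ boundaryStep ε r u := by
  set a := r ⬝ᵥ ((enorm2 u)⁻¹ • u)
  have hrε : enorm2 r ^ 2 ≤ ε ^ 2 := pow_le_pow_left₀ (enorm2_nonneg r) hr 2
  have ha : |a| ≤ √(a ^ 2 - enorm2 r ^ 2 + ε ^ 2) := Real.abs_le_sqrt (by linarith)
  exact div_nonneg (by linarith [le_abs_self a]) (enorm2_nonneg u)

lemma enorm2_add_boundaryStep_smul (hu : u ≠ 0) (hr : enorm2 r ≤ ε) :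
    enorm2 (r + boundaryStep ε r u • u) = ε := by
  have hε : 0 ≤ ε := (enorm2_nonneg r).trans hr
  have hb : 0 < enorm2 u := enorm2_pos hu
  set b := enorm2 u
  set a := r ⬝ᵥ (b⁻¹ • u)
  set s := √(a ^ 2 - enorm2 r ^ 2 + ε ^ 2)
  have hrε : enorm2 r ^ 2 ≤ ε ^ 2 := pow_le_pow_left₀ (enorm2_nonneg r) hr 2
  have hs : s ^ 2 = a ^ 2 - enorm2 r ^ 2 + ε ^ 2 := Real.sq_sqrt (by nlinarith)
  have hru : r ⬝ᵥ u = a * b := by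
    simp only [a, dotProduct_smul, smul_eq_mul]
    field_simp
  have htb : boundaryStep ε r u * b = -a + s := div_mul_cancel₀ _ hb.ne'
  rw [← sq_eq_sq₀ (enorm2_nonneg _) hε, enorm2_add_smul_sq, hru]
  linear_combination (boundaryStep ε r u * b + s + a) * htb + hs

end boundaryStep

lemma mulVec_add_smul_add {m k : Type*} [Fintype k] (N : Matrix m k ℝ) (v d : k → ℝ)
    (w : m → ℝ) (t : ℝ) : N *ᵥ (v + t • d) + w = (N *ᵥ v + w) + t • N *ᵥ d := by
  rw [mulVec_add, mulVec_smul]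
  abel

lemma dotProduct_mulVec_smul_transpose_mulVec_nonneg {m k : Type*} [Fintype m] [Fintype k]
    (N : Matrix m k ℝ) (g : m → ℝ) {c : ℝ} (hc : 0 ≤ c) : 0 ≤ g ⬝ᵥ N *ᵥ (c • Nᵀ *ᵥ g) := by
  rw [dotProduct_mulVec, ← mulVec_transpose, dotProduct_smul, smul_eq_mul]
  exact mul_nonneg hc (dotProduct_self_nonneg _)

lemma safeguarded_step_nonneg_and_feasible {ι : Type*} [Fintype ι] {r u : ι → ℝ}
    {ε lam t : ℝ} (hlam : 0 ≤ lam) (hr : enorm2 r ≤ ε)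
    (ht : (u = 0 ∧ t = 0) ∨ (u ≠ 0 ∧ ((enorm2 (r + lam • u) ≤ ε ∧ t = lam) ∨
      (¬ enorm2 (r + lam • u) ≤ ε ∧ t = boundaryStep ε r u)))) :
    0 ≤ t ∧ enorm2 (r + t • u) ≤ ε := by
  rcases ht with ⟨rfl, rfl⟩ | ⟨hu, ⟨htrial, rfl⟩ | ⟨-, rfl⟩⟩
  · simpa using hr
  · exact ⟨hlam, htrial⟩
  · exact ⟨boundaryStep_nonneg hr, (enorm2_add_boundaryStep_smul hu hr).le⟩

theorem stmt19_general {n q p : ℕ}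
    (N₁ : Matrix (Fin n) (Fin p) ℝ) (N₂ : Matrix (Fin q) (Fin p) ℝ)
    (w₁ : Fin n → ℝ) (w₂ : Fin q → ℝ)
    (ε lam : ℝ) (hlam : 0 < lam)
    (v d : ℕ → (Fin p → ℝ)) (lamk : ℕ → ℝ)
    (hfeas0 : enorm2 (N₂.mulVec (v 0) + w₂) ≤ ε)
    (hd : ∀ k, d k = N₁ᵀ.mulVec (N₁.mulVec (v k) + w₁) ∨
      (N₁ᵀ.mulVec (N₁.mulVec (v k) + w₁) ≠ 0 ∧
        d k = (enorm2 (N₁ᵀ.mulVec (N₁.mulVec (v k) + w₁)))⁻¹ •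
          N₁ᵀ.mulVec (N₁.mulVec (v k) + w₁)))
    (hlamk : ∀ k,
      (N₂.mulVec (d k) = 0 ∧ lamk k = 0) ∨
      (N₂.mulVec (d k) ≠ 0 ∧
        ((enorm2 ((N₂.mulVec (v k) + w₂) + lam • N₂.mulVec (d k)) ≤ ε ∧ lamk k = lam) ∨
         (¬ enorm2 ((N₂.mulVec (v k) + w₂) + lam • N₂.mulVec (d k)) ≤ ε ∧
           lamk k =
             (-((N₂.mulVec (v k) + w₂) ⬝ᵥ
                 ((enorm2 (N₂.mulVec (d k)))⁻¹ • N₂.mulVec (d k))) +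
               Real.sqrt (((N₂.mulVec (v k) + w₂) ⬝ᵥ
                   ((enorm2 (N₂.mulVec (d k)))⁻¹ • N₂.mulVec (d k))) ^ 2 -
                 enorm2 (N₂.mulVec (v k) + w₂) ^ 2 + ε ^ 2)) /
               enorm2 (N₂.mulVec (d k))))))
    (hstep : ∀ k, v (k + 1) = v k + lamk k • d k) :
    (∀ k, enorm2 (N₂.mulVec (v k) + w₂) ≤ ε) ∧
    Monotone (fun k => enorm2 (N₁.mulVec (v k) + w₁)) := by
  have step : ∀ k, enorm2 (N₂ *ᵥ v k + w₂) ≤ ε →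
      0 ≤ lamk k ∧ enorm2 (N₂ *ᵥ v (k + 1) + w₂) ≤ ε := fun k hk => by
    rw [hstep, mulVec_add_smul_add]
    exact safeguarded_step_nonneg_and_feasible hlam.le hk (hlamk k)
  have hfeas : ∀ k, enorm2 (N₂ *ᵥ v k + w₂) ≤ ε := fun k =>
    Nat.rec hfeas0 (fun k hk => (step k hk).2) k
  refine ⟨hfeas, monotone_nat_of_le_succ fun k => ?_⟩
  obtain ⟨c, hc, hdk⟩ : ∃ c : ℝ, 0 ≤ c ∧ d k = c • N₁ᵀ *ᵥ (N₁ *ᵥ v k + w₁) := by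
    rcases hd k with hdk | ⟨-, hdk⟩
    · exact ⟨1, zero_le_one, by rw [hdk, one_smul]⟩
    · exact ⟨_, inv_nonneg.mpr (enorm2_nonneg _), hdk⟩
  rw [hstep, mulVec_add_smul_add]
  refine enorm2_le_enorm2_add_smul ?_ (step k (hfeas k)).1
  rw [hdk]
  exact dotProduct_mulVec_smul_transpose_mulVec_nonneg N₁ _ hc

/-- The iteration `v_{k+1} = v_k + λ_k d_k`, where `d_k = N₁ᵀ(N₁ v_k + w₁⁻)`
(or its normalization), and `λ_k` is `λ` if the trial step stays feasible, the exact
boundary step `(−rᵀd̂ + √((rᵀd̂)² − ‖r‖² + ε̃²))/‖N₂ d_k‖` otherwise (and `0` if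
`N₂ d_k = 0`), keeps every iterate feasible (`‖N₂ v_k + w₂⁻‖₂ ≤ ε̃` for all `k`, given
`v₁` feasible) and makes `α(v_k) = ‖N₁ v_k + w₁⁻‖₂` monotone nondecreasing. -/
theorem stmt19 {n q p : ℕ}
    (N₁ : Matrix (Fin n) (Fin p) ℝ) (N₂ : Matrix (Fin q) (Fin p) ℝ)
    (w₁ : Fin n → ℝ) (w₂ : Fin q → ℝ)
    (ε lam : ℝ) (hε : 0 < ε) (hlam : 0 < lam)
    (v d : ℕ → (Fin p → ℝ)) (lamk : ℕ → ℝ)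
    (hfeas0 : enorm2 (N₂.mulVec (v 0) + w₂) ≤ ε)
    (hd : ∀ k, d k = N₁ᵀ.mulVec (N₁.mulVec (v k) + w₁) ∨
      (N₁ᵀ.mulVec (N₁.mulVec (v k) + w₁) ≠ 0 ∧
        d k = (enorm2 (N₁ᵀ.mulVec (N₁.mulVec (v k) + w₁)))⁻¹ •
          N₁ᵀ.mulVec (N₁.mulVec (v k) + w₁)))
    (hlamk : ∀ k,
      (N₂.mulVec (d k) = 0 ∧ lamk k = 0) ∨
      (N₂.mulVec (d k) ≠ 0 ∧
        ((enorm2 ((N₂.mulVec (v k) + w₂) + lam • N₂.mulVec (d k)) ≤ ε ∧ lamk k = lam) ∨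
         (¬ enorm2 ((N₂.mulVec (v k) + w₂) + lam • N₂.mulVec (d k)) ≤ ε ∧
           lamk k =
             (-((N₂.mulVec (v k) + w₂) ⬝ᵥ
                 ((enorm2 (N₂.mulVec (d k)))⁻¹ • N₂.mulVec (d k))) +
               Real.sqrt (((N₂.mulVec (v k) + w₂) ⬝ᵥ
                   ((enorm2 (N₂.mulVec (d k)))⁻¹ • N₂.mulVec (d k))) ^ 2 -
                 enorm2 (N₂.mulVec (v k) + w₂) ^ 2 + ε ^ 2)) /
               enorm2 (N₂.mulVec (d k))))))
    (hstep : ∀ k, v (k + 1) = v k + lamk k • d k) :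
    (∀ k, enorm2 (N₂.mulVec (v k) + w₂) ≤ ε) ∧
    Monotone (fun k => enorm2 (N₁.mulVec (v k) + w₁)) :=
  stmt19_general N₁ N₂ w₁ w₂ ε lam hlam v d lamk hfeas0 hd hlamk hstep
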